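/- Let θ be a stationary Markov chain on ℤ with values in a finite set Θ, such that P(θ(t) = q₂ | θ(t−1) = q₁) = p_{(q₂,q₁)} > 0 for all q₁,q₂ ∈ Θ and all t. Let Σ = Θ×Θ (identified with {1,…,n_p} where n_p = |Θ|²), and for (q₂,q₁) ∈ Σ define π_{(q₂,q₁)}(t) = χ(θ(t+1) = q₂ and θ(t) = q₁). Let E = {((q₂,q₁),(q₃,q₂)) : q₁,q₂,q₃ ∈ Θ} and α_σ = 1 for all σ ∈ Σ. Then π = (π_σ)_{σ∈Σ} is an admissible switching process, with the constants p_σ = p_{(q₂,q₁)} for σ = (q₂,q₁). -/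

import Mathlib

open MeasureTheory
open scoped Classical Matrix Kronecker

namespace GLSS

variable {Ω : Type*} [MeasurableSpace Ω]

/-- `piW π w t` is the product `π_{σ₁}(t-k+1)⋯π_{σ_k}(t)` for the word `w = σ₁⋯σ_k`
(and `1` for the empty word). -/
noncomputable def piW {Λ : Type*} (π : ℤ → Ω → Λ → ℝ) (w : List Λ) (t : ℤ) (ω : Ω) : ℝ :=
  ∏ i : Fin w.length, π (t - (w.length : ℤ) + 1 + ((i : ℕ) : ℤ)) ω (w.get i)

/-- `p_w = p_{σ₁}⋯p_{σ_k}`. -/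
noncomputable def pW {Λ : Type*} (p : Λ → ℝ) (w : List Λ) : ℝ := (w.map p).prod

/-- `z^r_w(t) = r(t-|w|) π_w(t-1) / √(p_w)`.  For `w = []` this is `r(t)` itself. -/
noncomputable def zW {Λ : Type*} {mι : Type*} (π : ℤ → Ω → Λ → ℝ) (p : Λ → ℝ)
    (r : ℤ → Ω → mι → ℝ) (w : List Λ) (t : ℤ) (ω : Ω) : mι → ℝ :=
  fun i => r (t - (w.length : ℤ)) ω i * piW π w (t - 1) ω / Real.sqrt (pW p w)

/-- A word is admissible w.r.t. the edge set `E` if all pairs of consecutive letters lie in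
`E`; the set of such (nonempty) words is the set `L` of admissible words. -/
def chainIn {Λ : Type*} (E : Set (Λ × Λ)) (w : List Λ) : Prop :=
  w.Chain' (fun a b => (a, b) ∈ E)

/-- The σ-algebra `F^{π,-}_t` generated by `{π(k)}_{k<t}`. -/
def sigmaPast {Λ : Type*} (π : ℤ → Ω → Λ → ℝ) (t : ℤ) : MeasurableSpace Ω :=
  ⨆ (k : ℤ) (_ : k < t), MeasurableSpace.comap (π k) inferInstance

/-- The σ-algebra `F^{π,+}_t` generated by `{π(k)}_{k≥t}`. -/
def sigmaFuture {Λ : Type*} (π : ℤ → Ω → Λ → ℝ) (t : ℤ) : MeasurableSpace Ω :=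
  ⨆ (k : ℤ) (_ : t ≤ k), MeasurableSpace.comap (π k) inferInstance

/-- The σ-algebra `F^r_t` generated by `{r(k)}_{k≤t}`. -/
def sigmaUpTo {β : Type*} [MeasurableSpace β] (r : ℤ → Ω → β) (t : ℤ) : MeasurableSpace Ω :=
  ⨆ (k : ℤ) (_ : k ≤ t), MeasurableSpace.comap (r k) inferInstance

/-- Conditional independence of the σ-algebras `m₁` and `m₂` given `m'`. -/
def CondIndepSigma (μ : Measure Ω) (m' m₁ m₂ : MeasurableSpace Ω) : Prop :=
  ∀ A B : Set Ω, MeasurableSet[m₁] A → MeasurableSet[m₂] B →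
    μ[(A ∩ B).indicator (fun _ => (1 : ℝ)) | m'] =ᵐ[μ]
      fun ω => ((μ[A.indicator (fun _ => (1 : ℝ)) | m']) ω) *
        ((μ[B.indicator (fun _ => (1 : ℝ)) | m']) ω)

/-- Admissible switching process (Definition 1 of the paper), with edge set `E`,
constants `{p_σ}` and `{α_σ}`. -/
structure IsAdmissible {Λ : Type*} [Fintype Λ] (μ : Measure Ω) (π : ℤ → Ω → Λ → ℝ)
    (E : Set (Λ × Λ)) (p : Λ → ℝ) (α : Λ → ℝ) : Prop where
  meas : ∀ t : ℤ, Measurable (π t)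
  sqInt : ∀ (w : List Λ) (t : ℤ), MemLp (piW π w t) 2 μ
  edge_total : ∀ σ : Λ, ∃ σ' : Λ, (σ, σ') ∈ E
  zero_off : ∀ w : List Λ, w ≠ [] → ¬ chainIn E w → ∀ t ω, piW π w t ω = 0
  p_pos : ∀ σ : Λ, 0 < p σ
  cond_pair : ∀ (w v : List Λ), w ≠ [] → v ≠ [] → ∀ (σ σ' : Λ) (t : ℤ),
    μ[fun ω => piW π (w ++ [σ]) t ω * piW π (v ++ [σ']) t ω | sigmaPast π t] =ᵐ[μ]
      (if σ = σ' ∧ chainIn E (w ++ [σ]) ∧ chainIn E (v ++ [σ]) then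
        (fun ω => p σ * (piW π w (t - 1) ω * piW π v (t - 1) ω)) else 0)
  cond_single : ∀ (w : List Λ), w ≠ [] → ∀ (σ σ' : Λ) (t : ℤ),
    μ[fun ω => piW π (w ++ [σ]) t ω * piW π [σ'] t ω | sigmaPast π t] =ᵐ[μ]
      (if σ = σ' ∧ chainIn E (w ++ [σ]) then (fun ω => p σ * piW π w (t - 1) ω) else 0)
  cond_letters : ∀ (σ σ' : Λ), σ ≠ σ' → ∀ t : ℤ,
    μ[fun ω => piW π [σ] t ω * piW π [σ'] t ω | sigmaPast π t] =ᵐ[μ] 0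
  alpha_sum : ∀ (t : ℤ) (ω : Ω), ∑ σ : Λ, α σ * piW π [σ] t ω = 1
  mean_stat : ∀ (w : List Λ) (t τ : ℤ), ∫ ω, piW π w t ω ∂μ = ∫ ω, piW π w (t + τ) ω ∂μ
  cov_stat : ∀ (w v : List Λ) (t s τ : ℤ),
    ∫ ω, piW π w t ω * piW π v s ω ∂μ = ∫ ω, piW π w (t + τ) ω * piW π v (s + τ) ω ∂μ

/-- Zero-mean wide-sense stationary w.r.t. `π` (ZMWSII) process. -/
structure IsZMWSII {Λ : Type*} [Fintype Λ] {mι : Type*} [Fintype mι]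
    (μ : Measure Ω) (π : ℤ → Ω → Λ → ℝ) (p : Λ → ℝ) (r : ℤ → Ω → mι → ℝ) : Prop where
  condIndep : ∀ t : ℤ, CondIndepSigma μ (sigmaPast π t) (sigmaUpTo r t) (sigmaFuture π t)
  sqInt : ∀ (w : List Λ) (t : ℤ), MemLp (zW π p r w t) 2 μ
  zeroMean : ∀ (w : List Λ) (t : ℤ) (i : mι), ∫ ω, zW π p r w t ω i ∂μ = 0
  jointWSS : ∀ (w v : List Λ) (t s τ : ℤ) (i j : mι),
    ∫ ω, zW π p r w t ω i * zW π p r v s ω j ∂μ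
      = ∫ ω, zW π p r w (t + τ) ω i * zW π p r v (s + τ) ω j ∂μ

/-- White noise w.r.t. `π`. -/
structure IsWhiteNoise {Λ : Type*} [Fintype Λ] [DecidableEq Λ] {mι : Type*} [Fintype mι]
    [DecidableEq mι] (μ : Measure Ω) (π : ℤ → Ω → Λ → ℝ) (p : Λ → ℝ)
    (r : ℤ → Ω → mι → ℝ) extends IsZMWSII μ π p r : Prop where
  orth : ∀ (w : List Λ), w ≠ [] → ∀ (σ : Λ) (v : List Λ) (t : ℤ) (i j : mι),
    ∫ ω, zW π p r w t ω i * zW π p r (σ :: v) t ω j ∂μ =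
      if w = σ :: v then ∫ ω, zW π p r [σ] t ω i * zW π p r [σ] t ω j ∂μ else 0
  nonsing : ∀ (σ : Λ) (t : ℤ),
    IsUnit (Matrix.of fun i j : mι => ∫ ω, zW π p r [σ] t ω i * zW π p r [σ] t ω j ∂μ)

/-- `A_w = A_{σ_k} ⋯ A_{σ₁}` for `w = σ₁⋯σ_k` (`A_ε = I`). -/
noncomputable def Aword {Λ : Type*} {ι : Type*} [Fintype ι] [DecidableEq ι]
    (A : Λ → Matrix ι ι ℝ) (w : List Λ) : Matrix ι ι ℝ :=
  w.foldl (fun M σ => A σ * M) 1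

/-- Stationary generalized linear switched system (sGLSS) of `(y, u, π)`, with matrices
`({A_σ, K_σ, B_σ}, C, D, F)`, state process `x` and noise process `v`. -/
structure IsSGLSS {Λ : Type*} [Fintype Λ] [DecidableEq Λ]
    {ι υ ν γ : Type*} [Fintype ι] [DecidableEq ι] [Fintype υ] [DecidableEq υ]
    [Fintype ν] [DecidableEq ν] [Fintype γ] [DecidableEq γ]
    (μ : Measure Ω) (π : ℤ → Ω → Λ → ℝ) (E : Set (Λ × Λ)) (p : Λ → ℝ)
    (A : Λ → Matrix ι ι ℝ) (K : Λ → Matrix ι ν ℝ) (B : Λ → Matrix ι υ ℝ)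
    (C : Matrix γ ι ℝ) (D : Matrix γ υ ℝ) (F : Matrix γ ν ℝ)
    (x : ℤ → Ω → ι → ℝ) (v : ℤ → Ω → ν → ℝ) (u : ℤ → Ω → υ → ℝ)
    (y : ℤ → Ω → γ → ℝ) : Prop where
  state_eq : ∀ t : ℤ, ∀ᵐ ω ∂μ,
    x (t + 1) ω = ∑ σ : Λ, π t ω σ • (A σ *ᵥ x t ω + B σ *ᵥ u t ω + K σ *ᵥ v t ω)
  output_eq : ∀ t : ℤ, ∀ᵐ ω ∂μ, y t ω = C *ᵥ x t ω + D *ᵥ u t ω + F *ᵥ v t ω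
  noise_white : IsWhiteNoise μ π p (fun t ω => Sum.elim (v t ω) (u t ω))
  joint_zmwsii : IsZMWSII μ π p (fun t ω => Sum.elim (x t ω) (Sum.elim (v t ω) (u t ω)))
  state_noise_orth : ∀ (σ : Λ) (t : ℤ) (i : ι) (j : ν ⊕ υ),
    ∫ ω, zW π p x [σ] t ω i *
      zW π p (fun t ω => Sum.elim (v t ω) (u t ω)) [σ] t ω j ∂μ = 0
  state_noise_orth' : ∀ (s : List Λ), s ≠ [] → ∀ (t : ℤ) (i : ι) (j : ν ⊕ υ),
    ∫ ω, x t ω i * zW π p (fun t ω => Sum.elim (v t ω) (u t ω)) s t ω j ∂μ = 0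
  stable : ∀ z ∈ spectrum ℂ
      ((∑ σ : Λ, p σ • Matrix.kroneckerMap (· * ·) (A σ) (A σ)).map (algebraMap ℝ ℂ)),
    ‖z‖ < 1
  off_edge : ∀ σ₁ σ₂ : Λ, (σ₁, σ₂) ∉ E →
    A σ₂ * A σ₁ = 0 ∧ ∀ t : ℤ,
      A σ₂ * Matrix.fromCols (K σ₁) (B σ₁) *
        Matrix.of (fun i j : ν ⊕ υ =>
          ∫ ω, zW π p (fun t ω => Sum.elim (v t ω) (u t ω)) [σ₁] t ω i *
            zW π p (fun t ω => Sum.elim (v t ω) (u t ω)) [σ₁] t ω j ∂μ) = 0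

/-- Autonomous stationary generalized linear switched system (asGLSS) of `(y, π)`, with
matrices `({A_σ, K_σ}, C, F)`, state process `x` and noise process `v`. -/
structure IsASGLSS {Λ : Type*} [Fintype Λ] [DecidableEq Λ]
    {ι ν γ : Type*} [Fintype ι] [DecidableEq ι] [Fintype ν] [DecidableEq ν]
    [Fintype γ] [DecidableEq γ]
    (μ : Measure Ω) (π : ℤ → Ω → Λ → ℝ) (E : Set (Λ × Λ)) (p : Λ → ℝ)
    (A : Λ → Matrix ι ι ℝ) (K : Λ → Matrix ι ν ℝ)
    (C : Matrix γ ι ℝ) (F : Matrix γ ν ℝ)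
    (x : ℤ → Ω → ι → ℝ) (v : ℤ → Ω → ν → ℝ) (y : ℤ → Ω → γ → ℝ) : Prop where
  state_eq : ∀ t : ℤ, ∀ᵐ ω ∂μ,
    x (t + 1) ω = ∑ σ : Λ, π t ω σ • (A σ *ᵥ x t ω + K σ *ᵥ v t ω)
  output_eq : ∀ t : ℤ, ∀ᵐ ω ∂μ, y t ω = C *ᵥ x t ω + F *ᵥ v t ω
  noise_white : IsWhiteNoise μ π p v
  joint_zmwsii : IsZMWSII μ π p (fun t ω => Sum.elim (x t ω) (v t ω))
  state_noise_orth : ∀ (σ : Λ) (t : ℤ) (i : ι) (j : ν),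
    ∫ ω, zW π p x [σ] t ω i * zW π p v [σ] t ω j ∂μ = 0
  state_noise_orth' : ∀ (s : List Λ), s ≠ [] → ∀ (t : ℤ) (i : ι) (j : ν),
    ∫ ω, x t ω i * zW π p v s t ω j ∂μ = 0
  stable : ∀ z ∈ spectrum ℂ
      ((∑ σ : Λ, p σ • Matrix.kroneckerMap (· * ·) (A σ) (A σ)).map (algebraMap ℝ ℂ)),
    ‖z‖ < 1
  off_edge : ∀ σ₁ σ₂ : Λ, (σ₁, σ₂) ∉ E →
    A σ₂ * A σ₁ = 0 ∧ ∀ t : ℤ,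
      A σ₂ * K σ₁ *
        Matrix.of (fun i j : ν => ∫ ω, zW π p v [σ₁] t ω i * zW π p v [σ₁] t ω j ∂μ) = 0

/-- `f` belongs to the closed subspace of `L²(μ)` generated by the set `S`:
it is an `L²`-limit of finite linear combinations of elements of `S`. -/
def memL2Span (μ : Measure Ω) (S : Set (Ω → ℝ)) (f : Ω → ℝ) : Prop :=
  ∀ ε : ℝ, 0 < ε → ∃ g ∈ Submodule.span ℝ S, eLpNorm (f - g) 2 μ < ENNReal.ofReal ε

/-- `f` is orthogonal in `L²(μ)` to the closed subspace generated by `S`. -/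
def orthToSpan (μ : Measure Ω) (S : Set (Ω → ℝ)) (f : Ω → ℝ) : Prop :=
  ∀ g : Ω → ℝ, MemLp g 2 μ → memL2Span μ S g → ∫ ω, f ω * g ω ∂μ = 0

/-- `g = E_l[f ∣ S]`: the orthogonal projection of `f` onto the closed linear span of `S`
in `L²(μ)`, characterized by `g` lying in the closed span and `f - g` being orthogonal to
every generator. -/
def IsLinearProj (μ : Measure Ω) (S : Set (Ω → ℝ)) (f g : Ω → ℝ) : Prop :=
  MemLp g 2 μ ∧ memL2Span μ S g ∧ ∀ h ∈ S, ∫ ω, (f ω - g ω) * h ω ∂μ = 0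

/-- The components of `{z^r_w(t)}_{w ∈ Σ⁺}` (generators of `H^r_t`). -/
def pastSpan {Λ : Type*} {mι : Type*} (π : ℤ → Ω → Λ → ℝ) (p : Λ → ℝ)
    (r : ℤ → Ω → mι → ℝ) (t : ℤ) : Set (Ω → ℝ) :=
  {f | ∃ (w : List Λ) (i : mι), w ≠ [] ∧ f = fun ω => zW π p r w t ω i}

/-- The components of `{z^r_w(t)}_{w ∈ Σ⁺} ∪ {r(t)}` (generators of `H^r_{t,+}`). -/
def pastPlusSpan {Λ : Type*} {mι : Type*} (π : ℤ → Ω → Λ → ℝ) (p : Λ → ℝ)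
    (r : ℤ → Ω → mι → ℝ) (t : ℤ) : Set (Ω → ℝ) :=
  {f | ∃ (w : List Λ) (i : mι), f = fun ω => zW π p r w t ω i}

/-- Unconditional convergence of the series `∑ f a` to `g` in the mean-square sense. -/
def HasSumL2 {κ : Type*} (μ : Measure Ω) (f : κ → Ω → ℝ) (g : Ω → ℝ) : Prop :=
  ∀ ε : ℝ, 0 < ε → ∃ s : Finset κ, ∀ T : Finset κ, s ⊆ T →
    eLpNorm (fun ω => (∑ a ∈ T, f a ω) - g ω) 2 μ < ENNReal.ofReal ε

set_option linter.unusedSectionVars false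
set_option maxHeartbeats 1000000

section MarkovAux

variable {Ω : Type*} [MeasurableSpace Ω]
variable {Θ : Type*} [Fintype Θ] [DecidableEq Θ] [MeasurableSpace Θ] [MeasurableSingletonClass Θ]

/-- The indicator switching process of a Markov chain. -/
noncomputable def mpi (θ : ℤ → Ω → Θ) : ℤ → Ω → Θ × Θ → ℝ :=
  fun t ω σ => if θ (t + 1) ω = σ.1 ∧ θ t ω = σ.2 then (1 : ℝ) else 0

variable {θ : ℤ → Ω → Θ}

lemma mpi_mem (t : ℤ) (ω : Ω) (σ : Θ × Θ) : mpi θ t ω σ = 0 ∨ mpi θ t ω σ = 1 := by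
  unfold mpi; split <;> simp

lemma mpi_ne_zero {t : ℤ} {ω : Ω} {σ : Θ × Θ} (h : mpi θ t ω σ ≠ 0) :
    θ (t + 1) ω = σ.1 ∧ θ t ω = σ.2 := by
  by_contra hc; exact h (by unfold mpi; rw [if_neg hc])

lemma mpi_mul_ne {t : ℤ} {ω : Ω} {σ σ' : Θ × Θ} (h : σ ≠ σ') :
    mpi θ t ω σ * mpi θ t ω σ' = 0 := by
  by_cases h1 : mpi θ t ω σ = 0
  · rw [h1, zero_mul]
  by_cases h2 : mpi θ t ω σ' = 0
  · rw [h2, mul_zero]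
  obtain ⟨a1, a2⟩ := mpi_ne_zero h1
  obtain ⟨b1, b2⟩ := mpi_ne_zero h2
  exact absurd (Prod.ext (a1.symm.trans b1) (a2.symm.trans b2)) h

lemma piW_nil {Λ : Type*} (π : ℤ → Ω → Λ → ℝ) (t : ℤ) (ω : Ω) : piW π [] t ω = 1 := by
  simp [piW]

lemma piW_cons {Λ : Type*} (π : ℤ → Ω → Λ → ℝ) (a : Λ) (w : List Λ) (t : ℤ) (ω : Ω) :
    piW π (a :: w) t ω = π (t - w.length) ω a * piW π w t ω := by
  show (∏ i : Fin (w.length + 1),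
      π (t - ((w.length : ℤ) + 1) + 1 + ((i : ℕ) : ℤ)) ω ((a :: w).get (Fin.cast rfl i))) = _
  rw [Fin.prod_univ_succ]
  unfold piW
  congr 1
  · show π (t - ((w.length : ℤ) + 1) + 1 + ((((0 : Fin (w.length + 1)) : ℕ)) : ℤ)) ω a = _
    rw [show t - ((w.length : ℤ) + 1) + 1 + ((((0 : Fin (w.length + 1)) : ℕ)) : ℤ)
        = t - (w.length : ℤ) by push_cast [Fin.val_zero]; ring]
  · apply Finset.prod_congr rfl
    intro i _
    show π (t - ((w.length : ℤ) + 1) + 1 + (((i.succ : Fin (w.length + 1)) : ℕ) : ℤ)) ω (w.get i) = _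
    rw [show t - ((w.length : ℤ) + 1) + 1 + (((i.succ : Fin (w.length + 1)) : ℕ) : ℤ)
        = t - (w.length : ℤ) + 1 + ((i : ℕ) : ℤ) by push_cast [Fin.val_succ]; ring]

lemma piW_singleton {Λ : Type*} (π : ℤ → Ω → Λ → ℝ) (a : Λ) (t : ℤ) (ω : Ω) :
    piW π [a] t ω = π t ω a := by
  rw [piW_cons, piW_nil, mul_one]
  norm_num

lemma piW_append_singleton {Λ : Type*} (π : ℤ → Ω → Λ → ℝ) (w : List Λ) (σ : Λ) (t : ℤ)
    (ω : Ω) : piW π (w ++ [σ]) t ω = piW π w (t - 1) ω * π t ω σ := by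
  induction w generalizing t with
  | nil => simp [piW_nil, piW_singleton]
  | cons a w ih =>
    rw [List.cons_append, piW_cons, ih, piW_cons]
    rw [show ((w ++ [σ]).length : ℤ) = (w.length : ℤ) + 1 by simp]
    ring_nf

lemma prod_mem01 {ι : Type*} (s : Finset ι) (f : ι → ℝ) (hf : ∀ i, f i = 0 ∨ f i = 1) :
    (∏ i ∈ s, f i) = 0 ∨ (∏ i ∈ s, f i) = 1 := by
  induction s using Finset.induction with
  | empty => simp
  | @insert a s ha ih =>
    rw [Finset.prod_insert ha]
    rcases hf a with h1 | h1 <;> rcases ih with h2 | h2 <;> simp [h1, h2]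

lemma piW_mem (w : List (Θ × Θ)) (t : ℤ) (ω : Ω) :
    piW (mpi θ) w t ω = 0 ∨ piW (mpi θ) w t ω = 1 :=
  prod_mem01 _ _ (fun i => mpi_mem _ _ _)

lemma piW_factor {w : List (Θ × Θ)} {t : ℤ} {ω : Ω} (h : piW (mpi θ) w t ω ≠ 0)
    (i : Fin w.length) :
    θ (t - w.length + 1 + (i : ℕ) + 1) ω = (w.get i).1 ∧
      θ (t - w.length + 1 + (i : ℕ)) ω = (w.get i).2 := by
  unfold piW at h
  rw [Finset.prod_ne_zero_iff] at h
  exact mpi_ne_zero (h i (Finset.mem_univ i))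

lemma piW_zero_of_not_chain {w : List (Θ × Θ)}
    (hw : ¬ chainIn {e : (Θ × Θ) × (Θ × Θ) | e.1.1 = e.2.2} w) (t : ℤ) (ω : Ω) :
    piW (mpi θ) w t ω = 0 := by
  by_contra h
  apply hw
  rw [chainIn, List.Chain', List.isChain_iff_getElem]
  intro i hi
  have h1 := (piW_factor h ⟨i, by omega⟩).1
  have h2 := (piW_factor h ⟨i + 1, by omega⟩).2
  simp only [Set.mem_setOf_eq]
  rw [List.get_eq_getElem] at h1 h2
  rw [← h1, ← h2]
  congr 1
  push_cast; ring

lemma piW_last {w : List (Θ × Θ)} (hw : w ≠ []) {t : ℤ} {ω : Ω}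
    (h : piW (mpi θ) w t ω ≠ 0) : θ (t + 1) ω = (w.getLast hw).1 := by
  have hl : 0 < w.length := List.length_pos_iff.mpr hw
  have hfac := (piW_factor h ⟨w.length - 1, by omega⟩).1
  have hge : (w.get ⟨w.length - 1, by omega⟩) = w.getLast hw := by
    rw [List.getLast_eq_getElem, List.get_eq_getElem]
  rw [hge] at hfac
  rw [← hfac]
  congr 1
  rw [Fin.val_mk]
  omega

lemma chain_last {w : List (Θ × Θ)} (hw : w ≠ []) {σ : Θ × Θ}
    (h : chainIn {e : (Θ × Θ) × (Θ × Θ) | e.1.1 = e.2.2} (w ++ [σ])) :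
    (w.getLast hw).1 = σ.2 := by
  rw [chainIn, List.Chain', List.isChain_append] at h
  exact h.2.2 _ (by rw [List.getLast?_eq_getLast_of_ne_nil hw]; rfl) σ rfl

end MarkovAux

section Meas

variable {Θ : Type*} [Fintype Θ] [DecidableEq Θ] [MeasurableSpace Θ] [MeasurableSingletonClass Θ]
variable {Ω : Type*} {θ : ℤ → Ω → Θ}

lemma measurable_mpi_cond {m : MeasurableSpace Ω} {u : ℤ} (h1 : Measurable[m] (θ (u + 1)))
    (h2 : Measurable[m] (θ u)) (σ : Θ × Θ) : Measurable[m] fun ω => mpi θ u ω σ := by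
  unfold mpi
  exact Measurable.ite
    ((h1 (measurableSet_singleton σ.1)).inter (h2 (measurableSet_singleton σ.2)))
    measurable_const measurable_const

lemma measurable_mpi_pi {m : MeasurableSpace Ω} {u : ℤ} (h1 : Measurable[m] (θ (u + 1)))
    (h2 : Measurable[m] (θ u)) : Measurable[m] (mpi θ u) := by
  apply measurable_pi_lambda
  intro σ
  exact measurable_mpi_cond h1 h2 σ

lemma theta_measurable_upTo {s t : ℤ} (hs : s ≤ t) : Measurable[sigmaUpTo θ t] (θ s) :=
  measurable_iff_comap_le.mpr
    (le_iSup₂ (f := fun k (_ : k ≤ t) => MeasurableSpace.comap (θ k) inferInstance) s hs)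

lemma sigmaUpTo_le {m : MeasurableSpace Ω} (hmeas : ∀ t : ℤ, Measurable[m] (θ t)) (t : ℤ) :
    sigmaUpTo θ t ≤ m :=
  iSup₂_le fun s _ => measurable_iff_comap_le.mp (hmeas s)

lemma piW_measurable' {m : MeasurableSpace Ω} (w : List (Θ × Θ)) (t : ℤ)
    (hθ : ∀ s : ℤ, s ≤ t + 1 → Measurable[m] (θ s)) :
    Measurable[m] (fun ω => piW (mpi θ) w t ω) := by
  unfold piW
  apply Finset.measurable_prod
  intro i _
  have hi : ((i : ℕ) : ℤ) < (w.length : ℤ) := by exact_mod_cast i.isLt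
  have hi0 : (0 : ℤ) ≤ ((i : ℕ) : ℤ) := Int.ofNat_nonneg _
  exact measurable_mpi_cond (hθ _ (by omega)) (hθ _ (by omega)) _

lemma piW_measurable {m : MeasurableSpace Ω} (hmeas : ∀ t : ℤ, Measurable[m] (θ t))
    (w : List (Θ × Θ)) (t : ℤ) : Measurable[m] (fun ω => piW (mpi θ) w t ω) :=
  piW_measurable' w t (fun s _ => hmeas s)

lemma sigmaPast_eq (t : ℤ) : sigmaPast (mpi θ) t = sigmaUpTo θ t := by
  apply le_antisymm
  · apply iSup₂_le
    intro k hk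
    have hmk : Measurable[sigmaUpTo θ t] (mpi θ k) :=
      measurable_mpi_pi (theta_measurable_upTo (by omega)) (theta_measurable_upTo (by omega))
    exact measurable_iff_comap_le.mp hmk
  · apply iSup₂_le
    intro s hs
    suffices hth : Measurable[sigmaPast (mpi θ) t] (θ s) by
      exact measurable_iff_comap_le.mp hth
    letI : MeasurableSpace Ω := sigmaPast (mpi θ) t
    apply measurable_to_countable'
    intro q
    by_cases hst : s = t
    · subst hst
      have hset : (θ s ⁻¹' {q}) = ⋃ q' : Θ, (mpi θ (s - 1)) ⁻¹' {f | f (q, q') = 1} := by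
        ext ω
        simp only [Set.mem_preimage, Set.mem_singleton_iff, Set.mem_iUnion, Set.mem_setOf_eq]
        constructor
        · intro hq
          refine ⟨θ (s - 1) ω, ?_⟩
          unfold mpi
          rw [if_pos ⟨by rw [show s - 1 + 1 = s by ring]; exact hq, rfl⟩]
        · rintro ⟨q', hq'⟩
          have h2 := mpi_ne_zero (θ := θ) (t := s - 1) (ω := ω) (σ := (q, q'))
            (by rw [hq']; norm_num)
          rw [show s - 1 + 1 = s by ring] at h2
          exact h2.1
      rw [hset]
      apply MeasurableSet.iUnion
      intro q'
      have hle : MeasurableSpace.comap (mpi θ (s - 1)) inferInstance ≤ sigmaPast (mpi θ) s :=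
        le_iSup₂ (f := fun k (_ : k < s) => MeasurableSpace.comap (mpi θ k) inferInstance)
          (s - 1) (by omega)
      exact hle _ ⟨{f | f (q, q') = 1},
        (measurable_pi_apply (q, q')) (measurableSet_singleton 1), rfl⟩
    · have hst' : s < t := lt_of_le_of_ne hs hst
      have hset : (θ s ⁻¹' {q}) = ⋃ q' : Θ, (mpi θ s) ⁻¹' {f | f (q', q) = 1} := by
        ext ω
        simp only [Set.mem_preimage, Set.mem_singleton_iff, Set.mem_iUnion, Set.mem_setOf_eq]
        constructor
        · intro hq
          refine ⟨θ (s + 1) ω, ?_⟩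
          unfold mpi
          rw [if_pos ⟨rfl, hq⟩]
        · rintro ⟨q', hq'⟩
          exact (mpi_ne_zero (θ := θ) (t := s) (ω := ω) (σ := (q', q))
            (by rw [hq']; norm_num)).2
      rw [hset]
      apply MeasurableSet.iUnion
      intro q'
      have hle : MeasurableSpace.comap (mpi θ s) inferInstance ≤ sigmaPast (mpi θ) t :=
        le_iSup₂ (f := fun k (_ : k < t) => MeasurableSpace.comap (mpi θ k) inferInstance)
          s hst'
      exact hle _ ⟨{f | f (q', q) = 1},
        (measurable_pi_apply (q', q)) (measurableSet_singleton 1), rfl⟩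

end Meas

section Cond

variable {Ω : Type*} [MeasurableSpace Ω] {μ : MeasureTheory.Measure Ω}
  [MeasureTheory.IsProbabilityMeasure μ]
variable {Θ : Type*} [Fintype Θ] [DecidableEq Θ] [MeasurableSpace Θ] [MeasurableSingletonClass Θ]
variable {θ : ℤ → Ω → Θ}

lemma integrable_of_bdd {f : Ω → ℝ} (hf : Measurable f) (C : ℝ) (h : ∀ ω, |f ω| ≤ C) :
    MeasureTheory.Integrable f μ :=
  MeasureTheory.Integrable.mono' (MeasureTheory.integrable_const C) hf.aestronglyMeasurable
    (Filter.Eventually.of_forall (fun ω => by simpa using h ω))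

lemma memLp2_of_bdd {f : Ω → ℝ} (hf : Measurable f) (C : ℝ) (h : ∀ ω, |f ω| ≤ C) :
    MeasureTheory.MemLp f 2 μ :=
  MeasureTheory.MemLp.of_bound hf.aestronglyMeasurable C
    (Filter.Eventually.of_forall (fun ω => by simpa using h ω))

lemma piW_abs_le (w : List (Θ × Θ)) (t : ℤ) (ω : Ω) : |piW (mpi θ) w t ω| ≤ 1 := by
  rcases piW_mem (θ := θ) w t ω with h | h <;> simp [h]

lemma condexp_mul_indicator (hmeas : ∀ t : ℤ, Measurable (θ t)) (ptrans : Θ × Θ → ℝ)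
    (hmarkov : ∀ (t : ℤ) (q : Θ),
      μ[Set.indicator {ω | θ t ω = q} (fun _ => (1 : ℝ)) | sigmaUpTo θ (t - 1)]
        =ᵐ[μ] fun ω => ptrans (q, θ (t - 1) ω))
    (t : ℤ) (q : Θ) {g : Ω → ℝ} (hg : Measurable[sigmaUpTo θ t] g) (C : ℝ)
    (hgb : ∀ ω, |g ω| ≤ C) :
    μ[fun ω => g ω * (if θ (t + 1) ω = q then (1 : ℝ) else 0) | sigmaUpTo θ t]
      =ᵐ[μ] fun ω => g ω * ptrans (q, θ t ω) := by
  set ind : Ω → ℝ := Set.indicator {ω | θ (t + 1) ω = q} (fun _ => (1 : ℝ)) with hind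
  have hindval : ∀ ω, ind ω = if θ (t + 1) ω = q then (1 : ℝ) else 0 := by
    intro ω; by_cases h : θ (t + 1) ω = q <;> simp [hind, h]
  have hindb : ∀ ω, |ind ω| ≤ 1 := by
    intro ω; rw [hindval]; split <;> norm_num
  have hindmeas : Measurable ind :=
    Measurable.indicator measurable_const ((hmeas (t + 1)) (measurableSet_singleton q))
  have hindint : MeasureTheory.Integrable ind μ := integrable_of_bdd hindmeas 1 hindb
  have hgmeas0 : Measurable g := hg.mono (sigmaUpTo_le hmeas t) le_rfl
  have hmul : MeasureTheory.Integrable (g * ind) μ := by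
    apply integrable_of_bdd (hgmeas0.mul hindmeas) C
    intro ω
    calc |(g * ind) ω| = |g ω| * |ind ω| := abs_mul _ _
      _ ≤ C * 1 := mul_le_mul (hgb ω) (hindb ω) (abs_nonneg _) ((abs_nonneg _).trans (hgb ω))
      _ = C := mul_one C
  have h1 : μ[g * ind | sigmaUpTo θ t] =ᵐ[μ] g * μ[ind | sigmaUpTo θ t] :=
    MeasureTheory.condExp_mul_of_stronglyMeasurable_left hg.stronglyMeasurable hmul hindint
  have h2 := hmarkov (t + 1) q
  rw [show t + 1 - 1 = t from by ring] at h2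
  have heq : (fun ω => g ω * (if θ (t + 1) ω = q then (1 : ℝ) else 0)) = g * ind := by
    funext ω
    simp only [Pi.mul_apply]
    rw [hindval]
  rw [heq]
  refine h1.trans ?_
  filter_upwards [h2] with ω hω
  simp only [Pi.mul_apply]
  rw [hω]

lemma condexp_main (hmeas : ∀ t : ℤ, Measurable (θ t)) (ptrans : Θ × Θ → ℝ)
    (hmarkov : ∀ (t : ℤ) (q : Θ),
      μ[Set.indicator {ω | θ t ω = q} (fun _ => (1 : ℝ)) | sigmaUpTo θ (t - 1)]
        =ᵐ[μ] fun ω => ptrans (q, θ (t - 1) ω))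
    (t : ℤ) (σ : Θ × Θ) {g : Ω → ℝ} (hg : Measurable[sigmaUpTo θ t] g) (C : ℝ)
    (hgb : ∀ ω, |g ω| ≤ C) :
    μ[fun ω => (g ω * (if θ t ω = σ.2 then (1 : ℝ) else 0)) *
        (if θ (t + 1) ω = σ.1 then (1 : ℝ) else 0) | sigmaUpTo θ t]
      =ᵐ[μ] fun ω => g ω * (if θ t ω = σ.2 then (1 : ℝ) else 0) * ptrans σ := by
  have hg' : Measurable[sigmaUpTo θ t] (fun ω => g ω * (if θ t ω = σ.2 then (1 : ℝ) else 0)) := by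
    apply hg.mul
    exact Measurable.ite ((theta_measurable_upTo le_rfl) (measurableSet_singleton σ.2))
      measurable_const measurable_const
  have hb' : ∀ ω, |g ω * (if θ t ω = σ.2 then (1 : ℝ) else 0)| ≤ C := by
    intro ω
    have h1 : |(if θ t ω = σ.2 then (1 : ℝ) else 0)| ≤ 1 := by split <;> norm_num
    calc |g ω * _| = |g ω| * _ := abs_mul _ _
      _ ≤ C * 1 := mul_le_mul (hgb ω) h1 (abs_nonneg _) ((abs_nonneg _).trans (hgb ω))
      _ = C := mul_one C
  refine (condexp_mul_indicator hmeas ptrans hmarkov t σ.1 hg' C hb').trans ?_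
  apply Filter.Eventually.of_forall
  intro ω
  simp only []
  by_cases h : θ t ω = σ.2
  · rw [if_pos h, h, Prod.mk.eta]
  · simp [h]

end Cond

section Stat

variable {Θ : Type*} [Fintype Θ] [DecidableEq Θ] [MeasurableSpace Θ] [MeasurableSingletonClass Θ]
variable {Ω : Type*} [MeasurableSpace Ω] {μ : MeasureTheory.Measure Ω}

/-- `piW` as a function of a trajectory. -/
noncomputable def piWU (w : List (Θ × Θ)) (t : ℤ) (f : ℤ → Θ) : ℝ :=
  ∏ i : Fin w.length,
    if f (t - w.length + 1 + ((i : ℕ) : ℤ) + 1) = (w.get i).1 ∧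
        f (t - w.length + 1 + ((i : ℕ) : ℤ)) = (w.get i).2 then (1 : ℝ) else 0

lemma piWU_theta {θ : ℤ → Ω → Θ} (w : List (Θ × Θ)) (t : ℤ) (ω : Ω) :
    piWU w t (fun s => θ s ω) = piW (mpi θ) w t ω := rfl

lemma piWU_shift {θ : ℤ → Ω → Θ} (w : List (Θ × Θ)) (t τ : ℤ) (ω : Ω) :
    piWU w t (fun s => θ (s + τ) ω) = piW (mpi θ) w (t + τ) ω := by
  unfold piWU piW mpi
  apply Finset.prod_congr rfl
  intro i _
  have h1 : t - (w.length : ℤ) + 1 + ((i : ℕ) : ℤ) + 1 + τ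
      = t + τ - (w.length : ℤ) + 1 + ((i : ℕ) : ℤ) + 1 := by ring
  have h2 : t - (w.length : ℤ) + 1 + ((i : ℕ) : ℤ) + τ
      = t + τ - (w.length : ℤ) + 1 + ((i : ℕ) : ℤ) := by ring
  simp only [h1, h2]

lemma piWU_congr (w : List (Θ × Θ)) (t : ℤ) {f g : ℤ → Θ} (a b : ℤ)
    (h1 : a ≤ t - w.length + 1) (h2 : t + 2 ≤ b)
    (hfg : ∀ s : ℤ, a ≤ s → s < b → f s = g s) : piWU w t f = piWU w t g := by
  unfold piWU
  apply Finset.prod_congr rfl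
  intro i _
  have hi : ((i : ℕ) : ℤ) < (w.length : ℤ) := by exact_mod_cast i.isLt
  have hi0 : (0 : ℤ) ≤ ((i : ℕ) : ℤ) := Int.ofNat_nonneg _
  rw [hfg _ (by omega) (by omega), hfg _ (by omega) (by omega)]

/-- Restriction of a window function to finitely many coordinates. -/
noncomputable def windowFn [Nonempty Θ] (H : (ℤ → Θ) → ℝ) (a : ℤ) (n : ℕ) :
    (Fin n → Θ) → ℝ :=
  fun f => H (fun s => if h : a ≤ s ∧ s < a + (n : ℤ) then
    f ⟨(s - a).toNat, by omega⟩ else Classical.arbitrary Θ)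

lemma integral_window_shift [Nonempty Θ] {θ : ℤ → Ω → Θ}
    (hmeas : ∀ t : ℤ, Measurable (θ t))
    (hstat : ∀ (n : ℕ) (t τ : ℤ),
      MeasureTheory.Measure.map (fun ω (i : Fin n) => θ (t + (i : ℤ)) ω) μ =
        MeasureTheory.Measure.map (fun ω (i : Fin n) => θ (t + τ + (i : ℤ)) ω) μ)
    (H : (ℤ → Θ) → ℝ) (a : ℤ) (n : ℕ)
    (hH : ∀ f g : ℤ → Θ, (∀ s : ℤ, a ≤ s → s < a + (n : ℤ) → f s = g s) → H f = H g)
    (τ : ℤ) :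
    ∫ ω, H (fun s => θ s ω) ∂μ = ∫ ω, H (fun s => θ (s + τ) ω) ∂μ := by
  have hGmeas : Measurable (windowFn H a n) := measurable_of_finite _
  have hT : ∀ b : ℤ, Measurable (fun ω (i : Fin n) => θ (b + (i : ℤ)) ω) := fun b =>
    measurable_pi_lambda _ (fun i => hmeas _)
  have e1 : ∀ ω, H (fun s => θ s ω) = windowFn H a n (fun i : Fin n => θ (a + (i : ℤ)) ω) := by
    intro ω
    unfold windowFn
    apply hH
    intro s h1 h2
    rw [dif_pos ⟨h1, h2⟩]
    show θ s ω = θ (a + ((s - a).toNat : ℤ)) ω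
    congr 1
    omega
  have e2 : ∀ ω, H (fun s => θ (s + τ) ω)
      = windowFn H a n (fun i : Fin n => θ (a + τ + (i : ℤ)) ω) := by
    intro ω
    unfold windowFn
    apply hH
    intro s h1 h2
    rw [dif_pos ⟨h1, h2⟩]
    show θ (s + τ) ω = θ (a + τ + ((s - a).toNat : ℤ)) ω
    congr 1
    omega
  calc ∫ ω, H (fun s => θ s ω) ∂μ
      = ∫ ω, windowFn H a n (fun i : Fin n => θ (a + (i : ℤ)) ω) ∂μ := by simp only [e1]
    _ = ∫ f, windowFn H a n f
          ∂(MeasureTheory.Measure.map (fun ω (i : Fin n) => θ (a + (i : ℤ)) ω) μ) :=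
        (MeasureTheory.integral_map (hT a).aemeasurable hGmeas.aestronglyMeasurable).symm
    _ = ∫ f, windowFn H a n f
          ∂(MeasureTheory.Measure.map (fun ω (i : Fin n) => θ (a + τ + (i : ℤ)) ω) μ) := by
        rw [hstat n a τ]
    _ = ∫ ω, windowFn H a n (fun i : Fin n => θ (a + τ + (i : ℤ)) ω) ∂μ :=
        MeasureTheory.integral_map (hT (a + τ)).aemeasurable hGmeas.aestronglyMeasurable
    _ = ∫ ω, H (fun s => θ (s + τ) ω) ∂μ := by simp only [← e2]

end Stat

/-- Example 3: Markov-chain scheduling.  If `θ` is a stationary Markov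
chain on the finite set `Θ` with positive transition probabilities `p_{(q₂,q₁)}`, then
`π_{(q₂,q₁)}(t) = χ(θ(t+1) = q₂, θ(t) = q₁)` is an admissible switching process over
`Σ = Θ × Θ`, with `E = {((q₂,q₁),(q₃,q₂))}`, constants `p_{(q₂,q₁)}` and `α_σ = 1`. -/
theorem stmt16
    {Ω : Type*} [MeasurableSpace Ω] (μ : Measure Ω) [IsProbabilityMeasure μ]
    {Θ : Type*} [Fintype Θ] [DecidableEq Θ] [MeasurableSpace Θ] [MeasurableSingletonClass Θ]
    (θ : ℤ → Ω → Θ) (hmeas : ∀ t : ℤ, Measurable (θ t))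
    (hstat : ∀ (n : ℕ) (t τ : ℤ),
      Measure.map (fun ω (i : Fin n) => θ (t + (i : ℤ)) ω) μ =
        Measure.map (fun ω (i : Fin n) => θ (t + τ + (i : ℤ)) ω) μ)
    (ptrans : Θ × Θ → ℝ) (hppos : ∀ q : Θ × Θ, 0 < ptrans q)
    (hmarkov : ∀ (t : ℤ) (q : Θ),
      μ[Set.indicator {ω | θ t ω = q} (fun _ => (1 : ℝ)) | sigmaUpTo θ (t - 1)]
        =ᵐ[μ] fun ω => ptrans (q, θ (t - 1) ω)) :
    IsAdmissible μ
      (fun t ω (σ : Θ × Θ) => if θ (t + 1) ω = σ.1 ∧ θ t ω = σ.2 then (1 : ℝ) else 0)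
      {e : (Θ × Θ) × (Θ × Θ) | e.1.1 = e.2.2}
      (fun σ => ptrans σ) (fun _ => 1) := by
  classical
  have hΩ : Nonempty Ω := by
    by_contra h
    rw [not_nonempty_iff] at h
    have h1 : μ Set.univ = 1 := measure_univ
    rw [Set.univ_eq_empty_iff.mpr h] at h1
    simp at h1
  haveI : Nonempty Θ := ⟨θ 0 (Classical.choice hΩ)⟩
  have hπ : (fun t ω (σ : Θ × Θ) => if θ (t + 1) ω = σ.1 ∧ θ t ω = σ.2 then (1 : ℝ) else 0)
      = mpi θ := rfl
  rw [hπ]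
  refine ⟨?_, ?_, ?_, ?_, ?_, ?_, ?_, ?_, ?_, ?_, ?_⟩
  -- meas
  · exact fun t => measurable_mpi_pi (hmeas _) (hmeas _)
  -- sqInt
  · exact fun w t => memLp2_of_bdd (piW_measurable hmeas w t) 1 (piW_abs_le w t)
  -- edge_total
  · exact fun σ => ⟨(σ.1, σ.1), rfl⟩
  -- zero_off
  · exact fun w _ hc t ω => piW_zero_of_not_chain hc t ω
  -- p_pos
  · exact hppos
  -- cond_pair
  · intro w v hw hv σ σ' t
    rw [sigmaPast_eq]
    by_cases hσ : σ = σ'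
    · subst hσ
      by_cases hcw : chainIn {e : (Θ × Θ) × (Θ × Θ) | e.1.1 = e.2.2} (w ++ [σ])
      · by_cases hcv : chainIn {e : (Θ × Θ) × (Θ × Θ) | e.1.1 = e.2.2} (v ++ [σ])
        · rw [if_pos ⟨rfl, hcw, hcv⟩]
          have hlw : (w.getLast hw).1 = σ.2 := chain_last hw hcw
          have hlv : (v.getLast hv).1 = σ.2 := chain_last hv hcv
          have hint : (fun ω => piW (mpi θ) (w ++ [σ]) t ω * piW (mpi θ) (v ++ [σ]) t ω)
              = fun ω => ((fun ω => piW (mpi θ) w (t - 1) ω * piW (mpi θ) v (t - 1) ω) ω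
                  * (if θ t ω = σ.2 then (1 : ℝ) else 0))
                  * (if θ (t + 1) ω = σ.1 then (1 : ℝ) else 0) := by
            funext ω
            rw [piW_append_singleton, piW_append_singleton]
            by_cases h1 : θ (t + 1) ω = σ.1 <;> by_cases h2 : θ t ω = σ.2 <;>
              simp [mpi, h1, h2] <;> ring
          rw [hint]
          have hgmeas : Measurable[sigmaUpTo θ t]
              (fun ω => piW (mpi θ) w (t - 1) ω * piW (mpi θ) v (t - 1) ω) := by
            apply Measurable.mul <;>
              exact piW_measurable' _ (t - 1) (fun s hs => theta_measurable_upTo (by omega))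
          have hgb : ∀ ω, |piW (mpi θ) w (t - 1) ω * piW (mpi θ) v (t - 1) ω| ≤ 1 := by
            intro ω
            rw [abs_mul]
            calc |piW (mpi θ) w (t - 1) ω| * |piW (mpi θ) v (t - 1) ω| ≤ 1 * 1 :=
              mul_le_mul (piW_abs_le _ _ _) (piW_abs_le _ _ _) (abs_nonneg _) zero_le_one
              _ = 1 := mul_one 1
          refine (condexp_main hmeas ptrans hmarkov t σ hgmeas 1 hgb).trans ?_
          apply Filter.Eventually.of_forall
          intro ω
          show piW (mpi θ) w (t - 1) ω * piW (mpi θ) v (t - 1) ω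
              * (if θ t ω = σ.2 then (1 : ℝ) else 0) * ptrans σ
              = ptrans σ * (piW (mpi θ) w (t - 1) ω * piW (mpi θ) v (t - 1) ω)
          by_cases h2 : θ t ω = σ.2
          · rw [if_pos h2]; ring
          · have hw0 : piW (mpi θ) w (t - 1) ω = 0 := by
              by_contra hne
              have hl := piW_last hw hne
              rw [show t - 1 + 1 = t by ring] at hl
              exact h2 (hl.trans hlw)
            rw [hw0]; ring
        · rw [if_neg (by tauto)]
          have h0 : (fun ω => piW (mpi θ) (w ++ [σ]) t ω * piW (mpi θ) (v ++ [σ]) t ω)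
              = (0 : Ω → ℝ) := by
            funext ω
            rw [piW_zero_of_not_chain hcv t ω, mul_zero]
            rfl
          rw [h0, condExp_zero]
      · rw [if_neg (by tauto)]
        have h0 : (fun ω => piW (mpi θ) (w ++ [σ]) t ω * piW (mpi θ) (v ++ [σ]) t ω)
            = (0 : Ω → ℝ) := by
          funext ω
          rw [piW_zero_of_not_chain hcw t ω, zero_mul]
          rfl
        rw [h0, condExp_zero]
    · rw [if_neg (by tauto)]
      have h0 : (fun ω => piW (mpi θ) (w ++ [σ]) t ω * piW (mpi θ) (v ++ [σ']) t ω)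
          = (0 : Ω → ℝ) := by
        funext ω
        rw [piW_append_singleton, piW_append_singleton]
        have hmm := mpi_mul_ne (θ := θ) (t := t) (ω := ω) hσ
        show piW (mpi θ) w (t - 1) ω * mpi θ t ω σ * (piW (mpi θ) v (t - 1) ω * mpi θ t ω σ')
            = (0 : ℝ)
        calc piW (mpi θ) w (t - 1) ω * mpi θ t ω σ * (piW (mpi θ) v (t - 1) ω * mpi θ t ω σ')
            = piW (mpi θ) w (t - 1) ω * piW (mpi θ) v (t - 1) ω * (mpi θ t ω σ * mpi θ t ω σ') := by
              ring
          _ = 0 := by rw [hmm, mul_zero]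
      rw [h0, condExp_zero]
  -- cond_single
  · intro w hw σ σ' t
    rw [sigmaPast_eq]
    by_cases hσ : σ = σ'
    · subst hσ
      by_cases hcw : chainIn {e : (Θ × Θ) × (Θ × Θ) | e.1.1 = e.2.2} (w ++ [σ])
      · rw [if_pos ⟨rfl, hcw⟩]
        have hlw : (w.getLast hw).1 = σ.2 := chain_last hw hcw
        have hint : (fun ω => piW (mpi θ) (w ++ [σ]) t ω * piW (mpi θ) [σ] t ω)
            = fun ω => ((fun ω => piW (mpi θ) w (t - 1) ω) ω
                * (if θ t ω = σ.2 then (1 : ℝ) else 0))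
                * (if θ (t + 1) ω = σ.1 then (1 : ℝ) else 0) := by
          funext ω
          rw [piW_append_singleton, piW_singleton]
          by_cases h1 : θ (t + 1) ω = σ.1 <;> by_cases h2 : θ t ω = σ.2 <;>
            simp [mpi, h1, h2] <;> ring
        rw [hint]
        have hgmeas : Measurable[sigmaUpTo θ t] (fun ω => piW (mpi θ) w (t - 1) ω) :=
          piW_measurable' _ (t - 1) (fun s hs => theta_measurable_upTo (by omega))
        refine (condexp_main hmeas ptrans hmarkov t σ hgmeas 1
          (fun ω => piW_abs_le _ _ _)).trans ?_
        apply Filter.Eventually.of_forall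
        intro ω
        show piW (mpi θ) w (t - 1) ω * (if θ t ω = σ.2 then (1 : ℝ) else 0) * ptrans σ
            = ptrans σ * piW (mpi θ) w (t - 1) ω
        by_cases h2 : θ t ω = σ.2
        · rw [if_pos h2]; ring
        · have hw0 : piW (mpi θ) w (t - 1) ω = 0 := by
            by_contra hne
            have hl := piW_last hw hne
            rw [show t - 1 + 1 = t by ring] at hl
            exact h2 (hl.trans hlw)
          rw [hw0]; ring
      · rw [if_neg (by tauto)]
        have h0 : (fun ω => piW (mpi θ) (w ++ [σ]) t ω * piW (mpi θ) [σ] t ω)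
            = (0 : Ω → ℝ) := by
          funext ω
          rw [piW_zero_of_not_chain hcw t ω, zero_mul]
          rfl
        rw [h0, condExp_zero]
    · rw [if_neg (by tauto)]
      have h0 : (fun ω => piW (mpi θ) (w ++ [σ]) t ω * piW (mpi θ) [σ'] t ω)
          = (0 : Ω → ℝ) := by
        funext ω
        rw [piW_append_singleton, piW_singleton]
        have hmm := mpi_mul_ne (θ := θ) (t := t) (ω := ω) hσ
        show piW (mpi θ) w (t - 1) ω * mpi θ t ω σ * mpi θ t ω σ' = (0 : ℝ)
        rw [mul_assoc, hmm, mul_zero]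
      rw [h0, condExp_zero]
  -- cond_letters
  · intro σ σ' hσ t
    have h0 : (fun ω => piW (mpi θ) [σ] t ω * piW (mpi θ) [σ'] t ω) = (0 : Ω → ℝ) := by
      funext ω
      rw [piW_singleton, piW_singleton]
      exact mpi_mul_ne hσ
    rw [h0, condExp_zero]
  -- alpha_sum
  · intro t ω
    simp only [one_mul, piW_singleton]
    have hval : ∀ σ : Θ × Θ, mpi θ t ω σ = if σ = (θ (t + 1) ω, θ t ω) then (1 : ℝ) else 0 := by
      intro σ
      unfold mpi
      refine if_congr ?_ rfl rfl
      constructor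
      · rintro ⟨h1, h2⟩; exact Prod.ext h1.symm h2.symm
      · rintro rfl; exact ⟨rfl, rfl⟩
    rw [Finset.sum_congr rfl (fun σ _ => hval σ), Finset.sum_ite_eq' Finset.univ]
    simp
  -- mean_stat
  · intro w t τ
    have hH : ∀ f g : ℤ → Θ, (∀ s : ℤ, t - w.length + 1 ≤ s →
        s < t - w.length + 1 + ((w.length + 1 : ℕ) : ℤ) → f s = g s) →
        piWU w t f = piWU w t g := by
      intro f g h
      exact piWU_congr w t _ _ le_rfl (by push_cast; omega) h
    have key := integral_window_shift hmeas hstat (piWU w t) (t - w.length + 1)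
      (w.length + 1) hH τ
    calc ∫ ω, piW (mpi θ) w t ω ∂μ
        = ∫ ω, piWU w t (fun s => θ s ω) ∂μ := by simp only [piWU_theta]
      _ = ∫ ω, piWU w t (fun s => θ (s + τ) ω) ∂μ := key
      _ = ∫ ω, piW (mpi θ) w (t + τ) ω ∂μ := by simp only [piWU_shift]
  -- cov_stat
  · intro w v t s τ
    set a := min (t - (w.length : ℤ) + 1) (s - (v.length : ℤ) + 1) with ha
    set n := (max t s + 2 - a).toNat with hn
    have hH : ∀ f g : ℤ → Θ, (∀ u : ℤ, a ≤ u → u < a + (n : ℤ) → f u = g u) →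
        piWU w t f * piWU v s f = piWU w t g * piWU v s g := by
      intro f g h
      rw [piWU_congr w t a (a + (n : ℤ)) (by omega) (by omega) h,
        piWU_congr v s a (a + (n : ℤ)) (by omega) (by omega) h]
    have key := integral_window_shift hmeas hstat (fun f => piWU w t f * piWU v s f) a n hH τ
    calc ∫ ω, piW (mpi θ) w t ω * piW (mpi θ) v s ω ∂μ
        = ∫ ω, piWU w t (fun u => θ u ω) * piWU v s (fun u => θ u ω) ∂μ := by
          simp only [piWU_theta]
      _ = ∫ ω, piWU w t (fun u => θ (u + τ) ω) * piWU v s (fun u => θ (u + τ) ω) ∂μ := key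
      _ = ∫ ω, piW (mpi θ) w (t + τ) ω * piW (mpi θ) v (s + τ) ω ∂μ := by
          simp only [piWU_shift]

end GLSS
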